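/- The presheaf 2-monad 𝔓 = (P,s,y) on Q-Cat distributes flatly over itself by the distributive law λ given by λ_X = y_{PX}·sup_{PX}:PPX→PPX for every Q-category X; that is, this λ satisfies the lax naturality law (a), the P-unit law (b) with equality, the lax P-multiplication law (c), the lax T-unit law (d), and the lax T-multiplication law (e) with T = P, m = s, e = y. -/

import Mathlib

/-!
Common framework: quantaloids, `Q`-categories, `Q`-functors, `Q`-distributors,
(co)presheaf constructions, 2-monads on `Q`-Cat, lax distributive laws over the
presheaf 2-monad, and lax extensions to `Q`-Dist.
-/

set_option autoImplicit false

universe u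

namespace QT

/-- A (small) quantaloid: a category enriched in complete lattices, with
composition preserving suprema in each variable. -/
structure Quantaloid : Type (u + 1) where
  Obj : Type u
  Hom : Obj → Obj → Type u
  lat : ∀ a b, CompleteLattice (Hom a b)
  comp : ∀ {a b c}, Hom b c → Hom a b → Hom a c
  idm : ∀ a, Hom a a
  comp_assoc : ∀ {a b c d} (w : Hom c d) (v : Hom b c) (u : Hom a b),
    comp (comp w v) u = comp w (comp v u)
  comp_idm : ∀ {a b} (u : Hom a b), comp u (idm a) = u
  idm_comp : ∀ {a b} (u : Hom a b), comp (idm b) u = u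
  comp_sSup : ∀ {a b c} (v : Hom b c) (S : Set (Hom a b)),
    comp v (sSup S) = ⨆ u ∈ S, comp v u
  sSup_comp : ∀ {a b c} (S : Set (Hom b c)) (u : Hom a b),
    comp (sSup S) u = ⨆ v ∈ S, comp v u

attribute [instance] Quantaloid.lat

namespace Quantaloid

variable {Q : Quantaloid.{u}}

theorem comp_iSup {a b c : Q.Obj} (v : Q.Hom b c) {ι : Sort*} (f : ι → Q.Hom a b) :
    Q.comp v (⨆ i, f i) = ⨆ i, Q.comp v (f i) := by
  rw [iSup, Q.comp_sSup, iSup_range]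

theorem iSup_comp {a b c : Q.Obj} {ι : Sort*} (f : ι → Q.Hom b c) (u : Q.Hom a b) :
    Q.comp (⨆ i, f i) u = ⨆ i, Q.comp (f i) u := by
  rw [iSup, Q.sSup_comp, iSup_range]

theorem comp_le_comp {a b c : Q.Obj} {v v' : Q.Hom b c} {u u' : Q.Hom a b}
    (hv : v ≤ v') (hu : u ≤ u') : Q.comp v u ≤ Q.comp v' u' := by
  have h1 : Q.comp v' u ≤ Q.comp v' u' := by
    have h := Q.comp_sSup v' {u, u'}
    rw [sSup_pair, sup_eq_right.mpr hu] at h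
    rw [h]
    exact le_biSup (fun x => Q.comp v' x) (Set.mem_insert _ _)
  have h2 : Q.comp v u ≤ Q.comp v' u := by
    have h := Q.sSup_comp {v, v'} u
    rw [sSup_pair, sup_eq_right.mpr hv] at h
    rw [h]
    exact le_biSup (fun x => Q.comp x u) (Set.mem_insert _ _)
  exact le_trans h2 h1

/-- Internal hom `w ↙ u` (right adjoint to `- ∘ u`). -/
def lda {a b c : Q.Obj} (w : Q.Hom a c) (u : Q.Hom a b) : Q.Hom b c :=
  sSup {v | Q.comp v u ≤ w}

/-- Internal hom `v ↘ w` (right adjoint to `v ∘ -`). -/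
def rda {a b c : Q.Obj} (v : Q.Hom b c) (w : Q.Hom a c) : Q.Hom a b :=
  sSup {u | Q.comp v u ≤ w}

theorem le_lda {a b c : Q.Obj} {v : Q.Hom b c} {u : Q.Hom a b} {w : Q.Hom a c} :
    Q.comp v u ≤ w ↔ v ≤ lda w u := by
  constructor
  · exact fun h => le_sSup h
  · intro h
    calc Q.comp v u ≤ Q.comp (lda w u) u := comp_le_comp h le_rfl
      _ ≤ w := by
          rw [lda, Q.sSup_comp]; exact iSup₂_le fun v' hv' => hv'

theorem le_rda {a b c : Q.Obj} {v : Q.Hom b c} {u : Q.Hom a b} {w : Q.Hom a c} :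
    Q.comp v u ≤ w ↔ u ≤ rda v w := by
  constructor
  · exact fun h => le_sSup h
  · intro h
    calc Q.comp v u ≤ Q.comp v (rda v w) := comp_le_comp le_rfl h
      _ ≤ w := by
          rw [rda, Q.comp_sSup]; exact iSup₂_le fun u' hu' => hu'

end Quantaloid

variable {Q : Quantaloid.{u}}

/-- `Q`-relations between families of sets indexed by the objects of `Q`
(i.e. sets over `ob Q`, presented fibrewise). -/
abbrev QRel (Q : Quantaloid.{u}) (X Y : Q.Obj → Type u) : Type u :=
  ∀ p q, X p → Y q → Q.Hom p q

/-- Composition of `Q`-relations. -/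
def QRel.comp {X Y Z : Q.Obj → Type u} (ψ : QRel Q Y Z) (φ : QRel Q X Y) : QRel Q X Z :=
  fun p r x z => ⨆ q, ⨆ y : Y q, Q.comp (ψ q r y z) (φ p q x y)

theorem QRel.comp_mono {X Y Z : Q.Obj → Type u} {ψ ψ' : QRel Q Y Z} {φ φ' : QRel Q X Y}
    (h1 : ψ ≤ ψ') (h2 : φ ≤ φ') : QRel.comp ψ φ ≤ QRel.comp ψ' φ' := by
  intro p r x z
  exact iSup_mono fun q => iSup_mono fun y =>
    Quantaloid.comp_le_comp (h1 q r y z) (h2 p q x y)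

theorem QRel.comp_assoc {W X Y Z : Q.Obj → Type u}
    (χ : QRel Q Y Z) (ψ : QRel Q X Y) (φ : QRel Q W X) :
    QRel.comp (QRel.comp χ ψ) φ = QRel.comp χ (QRel.comp ψ φ) := by
  funext p s w z
  simp only [QRel.comp, Quantaloid.iSup_comp, Quantaloid.comp_iSup]
  apply le_antisymm
  · exact iSup₂_le fun q x => iSup₂_le fun r y =>
      le_iSup_of_le r (le_iSup_of_le y (le_iSup_of_le q (le_iSup_of_le x
        (Q.comp_assoc _ _ _).le)))
  · exact iSup₂_le fun r y => iSup₂_le fun q x =>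
      le_iSup_of_le q (le_iSup_of_le x (le_iSup_of_le r (le_iSup_of_le y
        (Q.comp_assoc _ _ _).ge)))

/-- A (small) `Q`-category. -/
structure QCat (Q : Quantaloid.{u}) : Type (u + 1) where
  el : Q.Obj → Type u
  hom : QRel Q el el
  refl : ∀ p (x : el p), Q.idm p ≤ hom p p x x
  trans : QRel.comp hom hom ≤ hom

/-- Pointwise transitivity in a `Q`-category. -/
theorem QCat.hom_comp_le (X : QCat Q) {p q r : Q.Obj}
    (x : X.el p) (y : X.el q) (z : X.el r) :
    Q.comp (X.hom q r y z) (X.hom p q x y) ≤ X.hom p r x z :=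
  le_trans
    (le_iSup_of_le q (le_iSup (fun y' : X.el q => Q.comp (X.hom q r y' z) (X.hom p q x y')) y))
    (X.trans p r x z)

/-- Any `Q`-relation into a `Q`-category embeds into its post-composite with the hom. -/
theorem QRel.le_hom_comp {W : Q.Obj → Type u} {Z : QCat Q} (ρ : QRel Q W Z.el) :
    ρ ≤ QRel.comp Z.hom ρ := by
  intro p q x z
  calc ρ p q x z = Q.comp (Q.idm q) (ρ p q x z) := (Q.idm_comp _).symm
    _ ≤ Q.comp (Z.hom q q z z) (ρ p q x z) := Quantaloid.comp_le_comp (Z.refl q z) le_rfl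
    _ ≤ _ := le_iSup_of_le q
        (le_iSup (fun z' : Z.el q => Q.comp (Z.hom q q z' z) (ρ p q x z')) z)

/-- Any `Q`-relation out of a `Q`-category embeds into its pre-composite with the hom. -/
theorem QRel.le_comp_hom {X : QCat Q} {W : Q.Obj → Type u} (ρ : QRel Q X.el W) :
    ρ ≤ QRel.comp ρ X.hom := by
  intro p q x z
  calc ρ p q x z = Q.comp (ρ p q x z) (Q.idm p) := (Q.comp_idm _).symm
    _ ≤ Q.comp (ρ p q x z) (X.hom p p x x) := Quantaloid.comp_le_comp le_rfl (X.refl p x)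
    _ ≤ _ := le_iSup_of_le p
        (le_iSup (fun x' : X.el p => Q.comp (ρ p q x' z) (X.hom p p x x')) x)

/-- A `Q`-functor. -/
structure QFun (X Y : QCat Q) : Type u where
  app : ∀ p, X.el p → Y.el p
  mono : ∀ p q (x : X.el p) (x' : X.el q),
    X.hom p q x x' ≤ Y.hom p q (app p x) (app q x')

def QFun.id (X : QCat Q) : QFun X X :=
  ⟨fun _ x => x, fun _ _ _ _ => le_rfl⟩

def QFun.comp {X Y Z : QCat Q} (g : QFun Y Z) (f : QFun X Y) : QFun X Z :=
  ⟨fun p x => g.app p (f.app p x),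
   fun p q x x' => le_trans (f.mono p q x x') (g.mono p q (f.app p x) (f.app q x'))⟩

/-- The (pointwise) order of `Q`-functors. -/
instance {X Y : QCat Q} : Preorder (QFun X Y) where
  le f g := ∀ p (x : X.el p), Q.idm p ≤ Y.hom p p (f.app p x) (g.app p x)
  le_refl f p x := Y.refl p (f.app p x)
  le_trans f g h h1 h2 := by
    intro p x
    calc Q.idm p = Q.comp (Q.idm p) (Q.idm p) := (Q.comp_idm _).symm
      _ ≤ Q.comp (Y.hom p p (g.app p x) (h.app p x)) (Y.hom p p (f.app p x) (g.app p x)) :=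
          Quantaloid.comp_le_comp (h2 p x) (h1 p x)
      _ ≤ Y.hom p p (f.app p x) (h.app p x) := Y.hom_comp_le _ _ _

/-- A `Q`-distributor between `Q`-categories. -/
structure QDist (X Y : QCat Q) : Type u where
  rel : QRel Q X.el Y.el
  compat : QRel.comp Y.hom (QRel.comp rel X.hom) ≤ rel

instance {X Y : QCat Q} : PartialOrder (QDist X Y) where
  le φ ψ := φ.rel ≤ ψ.rel
  le_refl φ := le_refl φ.rel
  le_trans _ _ _ h h' := by
    intro p q x y
    exact le_trans (h p q x y) (h' p q x y)
  le_antisymm φ ψ h h' := by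
    have hr : φ.rel = ψ.rel := le_antisymm h h'
    cases φ; cases ψ; cases hr; rfl

theorem QDist.hom_comp_le {X Y : QCat Q} (φ : QDist X Y) :
    QRel.comp Y.hom φ.rel ≤ φ.rel :=
  le_trans (QRel.comp_mono le_rfl (QRel.le_comp_hom φ.rel)) φ.compat

theorem QDist.comp_hom_le {X Y : QCat Q} (φ : QDist X Y) :
    QRel.comp φ.rel X.hom ≤ φ.rel :=
  le_trans (QRel.le_hom_comp _) φ.compat

theorem QDist.rel_comp_hom {X Y : QCat Q} (φ : QDist X Y) {p q r : Q.Obj}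
    (x : X.el p) (x' : X.el q) (y : Y.el r) :
    Q.comp (φ.rel q r x' y) (X.hom p q x x') ≤ φ.rel p r x y :=
  le_trans
    (le_iSup_of_le q (le_iSup (fun x'' : X.el q => Q.comp (φ.rel q r x'' y) (X.hom p q x x'')) x'))
    (φ.comp_hom_le p r x y)

theorem QDist.hom_comp_rel {X Y : QCat Q} (φ : QDist X Y) {p q r : Q.Obj}
    (x : X.el p) (y : Y.el q) (y' : Y.el r) :
    Q.comp (Y.hom q r y y') (φ.rel p q x y) ≤ φ.rel p r x y' :=
  le_trans
    (le_iSup_of_le q (le_iSup (fun y'' : Y.el q => Q.comp (Y.hom q r y'' y') (φ.rel p q x y'')) y))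
    (φ.hom_comp_le p r x y')

/-- Composition of `Q`-distributors. -/
def QDist.comp {X Y Z : QCat Q} (ψ : QDist Y Z) (φ : QDist X Y) : QDist X Z :=
  ⟨QRel.comp ψ.rel φ.rel, by
    calc QRel.comp Z.hom (QRel.comp (QRel.comp ψ.rel φ.rel) X.hom)
        = QRel.comp (QRel.comp Z.hom ψ.rel) (QRel.comp φ.rel X.hom) := by
          rw [QRel.comp_assoc, QRel.comp_assoc]
      _ ≤ QRel.comp ψ.rel φ.rel :=
          QRel.comp_mono ψ.hom_comp_le φ.comp_hom_le⟩

/-- The identity distributor `1_X^*` on a `Q`-category. -/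
def QCat.homDist (X : QCat Q) : QDist X X :=
  ⟨X.hom, le_trans (QRel.comp_mono le_rfl X.trans) X.trans⟩

/-- The graph `f_*` of a `Q`-functor. -/
def QFun.graph {X Y : QCat Q} (f : QFun X Y) : QDist X Y :=
  ⟨fun p q x y => Y.hom p q (f.app p x) y, by
    intro p q x y
    simp only [QRel.comp, Quantaloid.comp_iSup, Quantaloid.iSup_comp]
    refine iSup₂_le fun q' y' => iSup₂_le fun p' x' => ?_
    calc Q.comp (Y.hom q' q y' y) (Q.comp (Y.hom p' q' (f.app p' x') y') (X.hom p p' x x'))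
        ≤ Q.comp (Y.hom q' q y' y)
            (Q.comp (Y.hom p' q' (f.app p' x') y') (Y.hom p p' (f.app p x) (f.app p' x'))) :=
          Quantaloid.comp_le_comp le_rfl
            (Quantaloid.comp_le_comp le_rfl (f.mono p p' x x'))
      _ ≤ Q.comp (Y.hom q' q y' y) (Y.hom p q' (f.app p x) y') :=
          Quantaloid.comp_le_comp le_rfl (Y.hom_comp_le _ _ _)
      _ ≤ Y.hom p q (f.app p x) y := Y.hom_comp_le _ _ _⟩

/-- The cograph `f^*` of a `Q`-functor. -/
def QFun.cograph {X Y : QCat Q} (f : QFun X Y) : QDist Y X :=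
  ⟨fun p q y x => Y.hom p q y (f.app q x), by
    intro p q y x
    simp only [QRel.comp, Quantaloid.comp_iSup, Quantaloid.iSup_comp]
    refine iSup₂_le fun q' x' => iSup₂_le fun p' y' => ?_
    calc Q.comp (X.hom q' q x' x) (Q.comp (Y.hom p' q' y' (f.app q' x')) (Y.hom p p' y y'))
        ≤ Q.comp (Y.hom q' q (f.app q' x') (f.app q x))
            (Q.comp (Y.hom p' q' y' (f.app q' x')) (Y.hom p p' y y')) :=
          Quantaloid.comp_le_comp (f.mono q' q x' x) le_rfl
      _ ≤ Q.comp (Y.hom q' q (f.app q' x') (f.app q x)) (Y.hom p q' y (f.app q' x')) :=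
          Quantaloid.comp_le_comp le_rfl (Y.hom_comp_le _ _ _)
      _ ≤ Y.hom p q y (f.app q x) := Y.hom_comp_le _ _ _⟩

/-- The presheaf `Q`-category `P X`. -/
def QCat.P (X : QCat Q) : QCat Q where
  el s := { σ : ∀ p, X.el p → Q.Hom p s //
    ∀ p q (x : X.el p) (x' : X.el q), Q.comp (σ q x') (X.hom p q x x') ≤ σ p x }
  hom s s' σ σ' := ⨅ p, ⨅ x : X.el p, Quantaloid.lda (σ'.1 p x) (σ.1 p x)
  refl := by
    intro s σ
    refine le_iInf fun p => le_iInf fun x => Quantaloid.le_lda.mp ?_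
    rw [Q.idm_comp]
  trans := by
    intro s s'' σ σ''
    refine iSup₂_le fun s' σ' => ?_
    refine le_iInf fun p => le_iInf fun x => Quantaloid.le_lda.mp ?_
    rw [Q.comp_assoc]
    have h1 : Q.comp (⨅ p', ⨅ x' : X.el p', Quantaloid.lda (σ'.1 p' x') (σ.1 p' x'))
        (σ.1 p x) ≤ σ'.1 p x :=
      Quantaloid.le_lda.mpr (le_trans (iInf_le _ p) (iInf_le _ x))
    have h2 : Q.comp (⨅ p', ⨅ x' : X.el p', Quantaloid.lda (σ''.1 p' x') (σ'.1 p' x'))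
        (σ'.1 p x) ≤ σ''.1 p x :=
      Quantaloid.le_lda.mpr (le_trans (iInf_le _ p) (iInf_le _ x))
    exact le_trans (Quantaloid.comp_le_comp le_rfl h1) h2

/-- The copresheaf `Q`-category `P† X`. -/
def QCat.Pd (X : QCat Q) : QCat Q where
  el s := { τ : ∀ q, X.el q → Q.Hom s q //
    ∀ p q (x : X.el p) (x' : X.el q), Q.comp (X.hom p q x x') (τ p x) ≤ τ q x' }
  hom s s' τ τ' := ⨅ q, ⨅ x : X.el q, Quantaloid.rda (τ'.1 q x) (τ.1 q x)
  refl := by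
    intro s τ
    refine le_iInf fun q => le_iInf fun x => Quantaloid.le_rda.mp ?_
    rw [Q.comp_idm]
  trans := by
    intro s s'' τ τ''
    refine iSup₂_le fun s' τ' => ?_
    refine le_iInf fun q => le_iInf fun x => Quantaloid.le_rda.mp ?_
    rw [← Q.comp_assoc]
    have h1 : Q.comp (τ''.1 q x)
        (⨅ q', ⨅ x' : X.el q', Quantaloid.rda (τ''.1 q' x') (τ'.1 q' x')) ≤ τ'.1 q x :=
      Quantaloid.le_rda.mpr (le_trans (iInf_le _ q) (iInf_le _ x))
    have h2 : Q.comp (τ'.1 q x)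
        (⨅ q', ⨅ x' : X.el q', Quantaloid.rda (τ'.1 q' x') (τ.1 q' x')) ≤ τ.1 q x :=
      Quantaloid.le_rda.mpr (le_trans (iInf_le _ q) (iInf_le _ x))
    exact le_trans (Quantaloid.comp_le_comp h1 le_rfl) h2

/-- The Yoneda embedding `y_X : X → P X`. -/
def QCat.y (X : QCat Q) : QFun X X.P where
  app p x := ⟨fun q x' => X.hom q p x' x,
    fun p' q' x1 x2 => X.hom_comp_le x1 x2 x⟩
  mono := by
    intro p q x x'
    refine le_iInf fun r => le_iInf fun x'' => Quantaloid.le_lda.mp ?_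
    exact X.hom_comp_le x'' x x'

/-- The co-Yoneda embedding `y†_X : X → P† X`. -/
def QCat.yd (X : QCat Q) : QFun X X.Pd where
  app p x := ⟨fun q x' => X.hom p q x x',
    fun p' q' x1 x2 => X.hom_comp_le x x1 x2⟩
  mono := by
    intro p q x x'
    refine le_iInf fun r => le_iInf fun x'' => Quantaloid.le_rda.mp ?_
    exact X.hom_comp_le x x' x''

/-- `φ^→ : P Y → P X`, `τ ↦ τ ∘ φ`. -/
def QDist.fwd {X Y : QCat Q} (φ : QDist X Y) : QFun Y.P X.P where
  app s τ := ⟨fun p x => ⨆ q, ⨆ y : Y.el q, Q.comp (τ.1 q y) (φ.rel p q x y), by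
    intro p q x x'
    rw [Quantaloid.iSup_comp]
    refine iSup_le fun r => ?_
    rw [Quantaloid.iSup_comp]
    refine iSup_le fun y => ?_
    rw [Q.comp_assoc]
    exact le_iSup_of_le r (le_iSup_of_le y
      (Quantaloid.comp_le_comp le_rfl (φ.rel_comp_hom x x' y)))⟩
  mono := by
    intro s s' τ τ'
    refine le_iInf fun p => le_iInf fun x => Quantaloid.le_lda.mp ?_
    rw [Quantaloid.comp_iSup]
    refine iSup_le fun r => ?_
    rw [Quantaloid.comp_iSup]
    refine iSup_le fun y => ?_
    rw [← Q.comp_assoc]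
    have h : Q.comp (Y.P.hom s s' τ τ') (τ.1 r y) ≤ τ'.1 r y :=
      Quantaloid.le_lda.mpr (le_trans (iInf_le _ r) (iInf_le _ y))
    exact le_iSup_of_le r (le_iSup_of_le y (Quantaloid.comp_le_comp h le_rfl))

/-- `φ^↞ : P† X → P† Y`, `σ ↦ φ ∘ σ`. -/
def QDist.bwd {X Y : QCat Q} (φ : QDist X Y) : QFun X.Pd Y.Pd where
  app s σ := ⟨fun q y => ⨆ p, ⨆ x : X.el p, Q.comp (φ.rel p q x y) (σ.1 p x), by
    intro p q y y'
    rw [Quantaloid.comp_iSup]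
    refine iSup_le fun r => ?_
    rw [Quantaloid.comp_iSup]
    refine iSup_le fun x => ?_
    rw [← Q.comp_assoc]
    exact le_iSup_of_le r (le_iSup_of_le x
      (Quantaloid.comp_le_comp (φ.hom_comp_rel x y y') le_rfl))⟩
  mono := by
    intro s s' σ σ'
    refine le_iInf fun q => le_iInf fun y => Quantaloid.le_rda.mp ?_
    rw [Quantaloid.iSup_comp]
    refine iSup_le fun r => ?_
    rw [Quantaloid.iSup_comp]
    refine iSup_le fun x => ?_
    rw [Q.comp_assoc]
    have h : Q.comp (σ'.1 r x) (X.Pd.hom s s' σ σ') ≤ σ.1 r x :=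
      Quantaloid.le_rda.mpr (le_trans (iInf_le _ r) (iInf_le _ x))
    exact le_iSup_of_le r (le_iSup_of_le x (Quantaloid.comp_le_comp le_rfl h))

/-- `φ_→ : P X → P Y`, `σ ↦ σ ↙ φ`. -/
def QDist.fwdr {X Y : QCat Q} (φ : QDist X Y) : QFun X.P Y.P where
  app s σ := ⟨fun q y => ⨅ p, ⨅ x : X.el p, Quantaloid.lda (σ.1 p x) (φ.rel p q x y), by
    intro q q' y y'
    refine le_iInf fun p => le_iInf fun x => Quantaloid.le_lda.mp ?_
    rw [Q.comp_assoc]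
    have h1 : Q.comp (Y.hom q q' y y') (φ.rel p q x y) ≤ φ.rel p q' x y' :=
      φ.hom_comp_rel x y y'
    have h2 : Q.comp ((⨅ p', ⨅ x' : X.el p',
        Quantaloid.lda (σ.1 p' x') (φ.rel p' q' x' y')) : Q.Hom q' s) (φ.rel p q' x y')
        ≤ σ.1 p x :=
      Quantaloid.le_lda.mpr (le_trans (iInf_le _ p) (iInf_le _ x))
    exact le_trans (Quantaloid.comp_le_comp le_rfl h1) h2⟩
  mono := by
    intro s s' σ σ'
    refine le_iInf fun q => le_iInf fun y => Quantaloid.le_lda.mp ?_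
    refine le_iInf fun p => le_iInf fun x => Quantaloid.le_lda.mp ?_
    rw [Q.comp_assoc]
    have h1 : Q.comp ((⨅ p', ⨅ x' : X.el p',
        Quantaloid.lda (σ.1 p' x') (φ.rel p' q x' y)) : Q.Hom q s) (φ.rel p q x y)
        ≤ σ.1 p x :=
      Quantaloid.le_lda.mpr (le_trans (iInf_le _ p) (iInf_le _ x))
    have h2 : Q.comp (X.P.hom s s' σ σ') (σ.1 p x) ≤ σ'.1 p x :=
      Quantaloid.le_lda.mpr (le_trans (iInf_le _ p) (iInf_le _ x))
    exact le_trans (Quantaloid.comp_le_comp le_rfl h1) h2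

/-- Isbell `φ↑ : P X → P† Y`, `σ ↦ φ ↙ σ`. -/
def QDist.up {X Y : QCat Q} (φ : QDist X Y) : QFun X.P Y.Pd where
  app s σ := ⟨fun q y => ⨅ p, ⨅ x : X.el p, Quantaloid.lda (φ.rel p q x y) (σ.1 p x), by
    intro q q' y y'
    refine le_iInf fun p => le_iInf fun x => Quantaloid.le_lda.mp ?_
    rw [Q.comp_assoc]
    have h1 : Q.comp ((⨅ p', ⨅ x' : X.el p',
        Quantaloid.lda (φ.rel p' q x' y) (σ.1 p' x')) : Q.Hom s q) (σ.1 p x)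
        ≤ φ.rel p q x y :=
      Quantaloid.le_lda.mpr (le_trans (iInf_le _ p) (iInf_le _ x))
    exact le_trans (Quantaloid.comp_le_comp le_rfl h1) (φ.hom_comp_rel x y y')⟩
  mono := by
    intro s s' σ σ'
    refine le_iInf fun q => le_iInf fun y => Quantaloid.le_rda.mp ?_
    refine le_iInf fun p => le_iInf fun x => Quantaloid.le_lda.mp ?_
    rw [Q.comp_assoc]
    have h1 : Q.comp (X.P.hom s s' σ σ') (σ.1 p x) ≤ σ'.1 p x :=
      Quantaloid.le_lda.mpr (le_trans (iInf_le _ p) (iInf_le _ x))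
    have h2 : Q.comp ((⨅ p', ⨅ x' : X.el p',
        Quantaloid.lda (φ.rel p' q x' y) (σ'.1 p' x')) : Q.Hom s' q) (σ'.1 p x)
        ≤ φ.rel p q x y :=
      Quantaloid.le_lda.mpr (le_trans (iInf_le _ p) (iInf_le _ x))
    exact le_trans (Quantaloid.comp_le_comp le_rfl h1) h2

/-- Isbell `φ↓ : P† Y → P X`, `τ ↦ τ ↘ φ`. -/
def QDist.down {X Y : QCat Q} (φ : QDist X Y) : QFun Y.Pd X.P where
  app s τ := ⟨fun p x => ⨅ q, ⨅ y : Y.el q, Quantaloid.rda (τ.1 q y) (φ.rel p q x y), by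
    intro p p' x x'
    refine le_iInf fun q => le_iInf fun y => Quantaloid.le_rda.mp ?_
    rw [← Q.comp_assoc]
    have h1 : Q.comp (τ.1 q y) ((⨅ q', ⨅ y' : Y.el q',
        Quantaloid.rda (τ.1 q' y') (φ.rel p' q' x' y')) : Q.Hom p' s)
        ≤ φ.rel p' q x' y :=
      Quantaloid.le_rda.mpr (le_trans (iInf_le _ q) (iInf_le _ y))
    exact le_trans (Quantaloid.comp_le_comp h1 le_rfl) (φ.rel_comp_hom x x' y)⟩
  mono := by
    intro s s' τ τ'
    refine le_iInf fun p => le_iInf fun x => Quantaloid.le_lda.mp ?_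
    refine le_iInf fun q => le_iInf fun y => Quantaloid.le_rda.mp ?_
    rw [← Q.comp_assoc]
    have h1 : Q.comp (τ'.1 q y) (Y.Pd.hom s s' τ τ') ≤ τ.1 q y :=
      Quantaloid.le_rda.mpr (le_trans (iInf_le _ q) (iInf_le _ y))
    have h2 : Q.comp (τ.1 q y) ((⨅ q', ⨅ y' : Y.el q',
        Quantaloid.rda (τ.1 q' y') (φ.rel p q' x y')) : Q.Hom p s)
        ≤ φ.rel p q x y :=
      Quantaloid.le_rda.mpr (le_trans (iInf_le _ q) (iInf_le _ y))
    exact le_trans (Quantaloid.comp_le_comp h1 le_rfl) h2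

/-- The transpose `←φ : Y → P X` of a distributor `φ : X ⇸ Y`. -/
def QDist.transpose {X Y : QCat Q} (φ : QDist X Y) : QFun Y X.P where
  app q y := ⟨fun p x => φ.rel p q x y,
    fun p q' x x' => φ.rel_comp_hom x x' y⟩
  mono := by
    intro q q' y y'
    refine le_iInf fun p => le_iInf fun x => Quantaloid.le_lda.mp ?_
    exact φ.hom_comp_rel x y y'

/-- The inverse of transposition. -/
def QFun.untranspose {X Y : QCat Q} (g : QFun Y X.P) : QDist X Y :=
  ⟨fun p q x y => (g.app q y).1 p x, by
    intro p q x y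
    simp only [QRel.comp, Quantaloid.comp_iSup, Quantaloid.iSup_comp]
    refine iSup₂_le fun q' y' => iSup₂_le fun p' x' => ?_
    have h1 : Q.comp ((g.app q' y').1 p' x') (X.hom p p' x x') ≤ (g.app q' y').1 p x :=
      (g.app q' y').2 p p' x x'
    have h2 : Q.comp (Y.hom q' q y' y) ((g.app q' y').1 p x) ≤ (g.app q y).1 p x :=
      Quantaloid.le_lda.mpr
        (le_trans (g.mono q' q y' y) (le_trans (iInf_le _ p) (iInf_le _ x)))
    exact le_trans (Quantaloid.comp_le_comp le_rfl h1) h2⟩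

/-- `f_! := (f^*)^→ : P X → P Y`. -/
def pshf {X Y : QCat Q} (f : QFun X Y) : QFun X.P Y.P := f.cograph.fwd

/-- `f^! := (f_*)^→ : P Y → P X`. -/
def pshb {X Y : QCat Q} (f : QFun X Y) : QFun Y.P X.P := f.graph.fwd

/-- `f_† := (f_*)^↞ : P† X → P† Y`. -/
def cpsf {X Y : QCat Q} (f : QFun X Y) : QFun X.Pd Y.Pd := f.graph.bwd

/-- `f^† := (f^*)^↞ : P† Y → P† X`. -/
def cpsb {X Y : QCat Q} (f : QFun X Y) : QFun Y.Pd X.Pd := f.cograph.bwd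

/-- `sup_{P X} = y_X^! : P P X → P X`: the multiplication of the presheaf 2-monad. -/
def supP (X : QCat Q) : QFun X.P.P X.P := pshb X.y

/-- `inf_{P† X} = (y†_X)^† : P† P† X → P† X`: the multiplication of the copresheaf
2-monad. -/
def infPd (X : QCat Q) : QFun X.Pd.Pd X.Pd := cpsb X.yd

/-- Adjunction `f ⊣ g` in `Q`-Cat. -/
def QAdj {X Y : QCat Q} (f : QFun X Y) (g : QFun Y X) : Prop :=
  QFun.id X ≤ g.comp f ∧ f.comp g ≤ QFun.id Y

/-- Fully faithful `Q`-functors. -/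
def QFun.FullyFaithful {X Y : QCat Q} (f : QFun X Y) : Prop :=
  ∀ p q (x : X.el p) (x' : X.el q), X.hom p q x x' = Y.hom p q (f.app p x) (f.app q x')

/-- A `Q`-closure operation on a `Q`-category. -/
def IsClosureOp (Z : QCat Q) (c : QFun Z Z) : Prop :=
  QFun.id Z ≤ c ∧ c.comp c = c

/-- A 2-functor on `Q`-Cat. -/
structure TwoFunctor (Q : Quantaloid.{u}) : Type (u + 1) where
  obj : QCat Q → QCat Q
  map : ∀ {X Y : QCat Q}, QFun X Y → QFun (obj X) (obj Y)
  map_id : ∀ X : QCat Q, map (QFun.id X) = QFun.id (obj X)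
  map_comp : ∀ {X Y Z : QCat Q} (g : QFun Y Z) (f : QFun X Y),
    map (g.comp f) = (map g).comp (map f)
  map_mono : ∀ {X Y : QCat Q} {f g : QFun X Y}, f ≤ g → map f ≤ map g

/-- A 2-monad on `Q`-Cat. -/
structure TwoMonad (Q : Quantaloid.{u}) extends TwoFunctor Q where
  unit : ∀ X : QCat Q, QFun X (obj X)
  mult : ∀ X : QCat Q, QFun (obj (obj X)) (obj X)
  unit_nat : ∀ {X Y : QCat Q} (f : QFun X Y), (unit Y).comp f = (map f).comp (unit X)
  mult_nat : ∀ {X Y : QCat Q} (f : QFun X Y),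
    (mult Y).comp (map (map f)) = (map f).comp (mult X)
  mult_unit : ∀ X : QCat Q, (mult X).comp (unit (obj X)) = QFun.id (obj X)
  mult_map_unit : ∀ X : QCat Q, (mult X).comp (map (unit X)) = QFun.id (obj X)
  mult_assoc : ∀ X : QCat Q, (mult X).comp (map (mult X)) = (mult X).comp (mult (obj X))

/-- The type of families `λ_X : T P X → P T X`. -/
abbrev LamFamily (T : TwoFunctor Q) : Type (u + 1) :=
  ∀ X : QCat Q, QFun (T.obj X.P) ((T.obj X).P)

/-- Lax naturality law (a): `(Tf)_! ∘ λ_X ≤ λ_Y ∘ T(f_!)`. -/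
def LawA (T : TwoFunctor Q) (lam : LamFamily T) : Prop :=
  ∀ (X Y : QCat Q) (f : QFun X Y),
    (pshf (T.map f)).comp (lam X) ≤ (lam Y).comp (T.map (pshf f))

/-- Lax `P`-unit law (b): `y_{TX} ≤ λ_X ∘ T y_X`. -/
def LawB (T : TwoFunctor Q) (lam : LamFamily T) : Prop :=
  ∀ X : QCat Q, QCat.y (T.obj X) ≤ (lam X).comp (T.map X.y)

/-- The `P`-unit law (b) holding strictly (flatness). -/
def LawBstrict (T : TwoFunctor Q) (lam : LamFamily T) : Prop :=
  ∀ X : QCat Q, (lam X).comp (T.map X.y) = QCat.y (T.obj X)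

/-- Lax `P`-multiplication law (c): `s_{TX} ∘ (λ_X)_! ∘ λ_{PX} ≤ λ_X ∘ T s_X`. -/
def LawC (T : TwoFunctor Q) (lam : LamFamily T) : Prop :=
  ∀ X : QCat Q,
    (supP (T.obj X)).comp ((pshf (lam X)).comp (lam X.P)) ≤ (lam X).comp (T.map (supP X))

/-- Lax `T`-unit law (d): `(e_X)_! ≤ λ_X ∘ e_{PX}`. -/
def LawD (M : TwoMonad Q) (lam : LamFamily M.toTwoFunctor) : Prop :=
  ∀ X : QCat Q, pshf (M.unit X) ≤ (lam X).comp (M.unit X.P)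

/-- Lax `T`-multiplication law (e): `(m_X)_! ∘ λ_{TX} ∘ T λ_X ≤ λ_X ∘ m_{PX}`. -/
def LawE (M : TwoMonad Q) (lam : LamFamily M.toTwoFunctor) : Prop :=
  ∀ X : QCat Q,
    (pshf (M.mult X)).comp ((lam (M.obj X)).comp (M.map (lam X))) ≤ (lam X).comp (M.mult X.P)

def IsDistLawABC (T : TwoFunctor Q) (lam : LamFamily T) : Prop :=
  LawA T lam ∧ LawB T lam ∧ LawC T lam

/-- A (lax) distributive law of the 2-monad `M` over the presheaf 2-monad. -/
def IsDistLaw (M : TwoMonad Q) (lam : LamFamily M.toTwoFunctor) : Prop :=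
  IsDistLawABC M.toTwoFunctor lam ∧ LawD M lam ∧ LawE M lam

/-- A flat distributive law: (b) holds strictly. -/
def IsFlatDistLaw (M : TwoMonad Q) (lam : LamFamily M.toTwoFunctor) : Prop :=
  IsDistLaw M lam ∧ LawBstrict M.toTwoFunctor lam

/-- Lax `λ`-algebra: laws (f) and (g). -/
def IsLaxAlg (M : TwoMonad Q) (lam : LamFamily M.toTwoFunctor) (X : QCat Q)
    (p : QFun (M.obj X) X.P) : Prop :=
  X.y ≤ p.comp (M.unit X) ∧
  (supP X).comp ((pshf p).comp ((lam X).comp (M.map p))) ≤ p.comp (M.mult X)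

/-- Lax `λ`-homomorphism: law (h). -/
def IsLaxHom (M : TwoMonad Q) {X Y : QCat Q}
    (p : QFun (M.obj X) X.P) (q : QFun (M.obj Y) Y.P) (f : QFun X Y) : Prop :=
  (pshf f).comp p ≤ q.comp (M.map f)

/-- The type of families `T̂φ : TX ⇸ TY`, one for each `φ : X ⇸ Y`. -/
abbrev ExtFamily (T : TwoFunctor Q) : Type (u + 1) :=
  ∀ ⦃X Y : QCat Q⦄, QDist X Y → QDist (T.obj X) (T.obj Y)

/-- A lax extension of the 2-functor `T` to `Q`-Dist: conditions (1), (2), (3). -/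
def IsLaxExt (T : TwoFunctor Q) (ext : ExtFamily T) : Prop :=
  (∀ (X Y : QCat Q) (φ φ' : QDist X Y), φ ≤ φ' → ext φ ≤ ext φ') ∧
  (∀ (X Y Z : QCat Q) (φ : QDist X Y) (ψ : QDist Y Z), (ext ψ).comp (ext φ) ≤ ext (ψ.comp φ)) ∧
  (∀ (X Y : QCat Q) (f : QFun X Y),
    (T.map f).graph ≤ ext f.graph ∧ (T.map f).cograph ≤ ext f.cograph)

/-- Condition (4): `φ ∘ e_X^* ≤ e_Y^* ∘ T̂φ`. -/
def ExtLaw4 (M : TwoMonad Q) (ext : ExtFamily M.toTwoFunctor) : Prop :=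
  ∀ (X Y : QCat Q) (φ : QDist X Y),
    φ.comp (M.unit X).cograph ≤ ((M.unit Y).cograph).comp (ext φ)

/-- Condition (5): `T̂T̂φ ∘ m_X^* ≤ m_Y^* ∘ T̂φ`. -/
def ExtLaw5 (M : TwoMonad Q) (ext : ExtFamily M.toTwoFunctor) : Prop :=
  ∀ (X Y : QCat Q) (φ : QDist X Y),
    (ext (ext φ)).comp (M.mult X).cograph ≤ ((M.mult Y).cograph).comp (ext φ)

/-- A lax extension of the 2-monad `M` to `Q`-Dist. -/
def IsMonadLaxExt (M : TwoMonad Q) (ext : ExtFamily M.toTwoFunctor) : Prop :=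
  IsLaxExt M.toTwoFunctor ext ∧ ExtLaw4 M ext ∧ ExtLaw5 M ext

/-- Flatness of a lax extension: `T̂ 1_X^* = 1_{TX}^*`. -/
def FlatExt (T : TwoFunctor Q) (ext : ExtFamily T) : Prop :=
  ∀ X : QCat Q, ext X.homDist = (T.obj X).homDist

/-- From a lax distributive law to a lax extension: `←(T̂φ) = λ_X ∘ T(←φ)`. -/
def PhiExt (T : TwoFunctor Q) (lam : LamFamily T) : ExtFamily T :=
  fun X Y φ => QFun.untranspose ((lam X).comp (T.map φ.transpose))

/-- From a lax extension to a lax distributive law: `λ_X = ←(T̂((y_X)_*))`. -/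
def PsiLam (T : TwoFunctor Q) (ext : ExtFamily T) : LamFamily T :=
  fun X => (ext X.y.graph).transpose

/-- The canonical lax extension `T̂φ = (T ←φ)^* ∘ (T y_X)_*`. -/
def hatExt (T : TwoFunctor Q) : ExtFamily T :=
  fun X Y φ => ((T.map φ.transpose).cograph).comp (T.map X.y).graph

/-- `λ_X = y_{PX} ∘ sup_{PX}`: the flat distributive law of `P` over itself. -/
def lamP (X : QCat Q) : QFun X.P.P X.P.P := (QCat.y X.P).comp (supP X)

/-- `λ†_X = ((y_X)_†)^! ∘ y_{P†PX}`: the strict distributive law of `P†` over `P`. -/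
def lamd (X : QCat Q) : QFun X.P.Pd X.Pd.P := (pshb (cpsf X.y)).comp (QCat.y X.P.Pd)

/-- `Λ_X = y_{PP†X} ∘ ((y_X)_†)^!`: the flat distributive law of `P P†` over `P`. -/
def LamPPd (X : QCat Q) : QFun X.P.Pd.P X.Pd.P.P := (QCat.y X.Pd.P).comp (pshb (cpsf X.y))

/-- The multiplication `S_X = s_{P†X} ∘ (y†_{PP†X})^!` of the double presheaf 2-monad. -/
def Smult (X : QCat Q) : QFun X.Pd.P.Pd.P X.Pd.P := (supP X.Pd).comp (pshb (QCat.yd X.Pd.P))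

/-- `Λ†_X = (y_X^!)^{†!} ∘ y_{P†PPX}`: the flat distributive law of `P† P` over `P`. -/
def LamPdP (X : QCat Q) : QFun X.P.P.Pd X.P.Pd.P :=
  (pshf (cpsf (supP X))).comp (QCat.y X.P.P.Pd)

/-- The multiplication `S†_X = s†_{PX} ∘ (y_{P†PX})^†` of the double copresheaf
2-monad. -/
def Sdmult (X : QCat Q) : QFun X.P.Pd.P.Pd X.P.Pd := (infPd X.P).comp (cpsb (QCat.y X.P.Pd))

/-- Pointwise infimum of a family of `Q`-functors into a presheaf `Q`-category. -/
def QFun.iInfP {ι : Type u} {Z X : QCat Q} (F : ι → QFun Z X.P) : QFun Z X.P where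
  app s z := ⟨fun p x => ⨅ i, ((F i).app s z).1 p x, by
    intro p q x x'
    refine le_iInf fun i => ?_
    exact le_trans
      (Quantaloid.comp_le_comp (iInf_le (fun i => ((F i).app s z).1 q x') i) le_rfl)
      (((F i).app s z).2 p q x x')⟩
  mono := by
    intro s s' z z'
    refine le_iInf fun p => le_iInf fun x => Quantaloid.le_lda.mp ?_
    refine le_iInf fun i => ?_
    have h1 : Q.comp (Z.hom s s' z z') (⨅ j, ((F j).app s z).1 p x)
        ≤ Q.comp (Z.hom s s' z z') (((F i).app s z).1 p x) :=
      Quantaloid.comp_le_comp le_rfl (iInf_le _ i)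
    have h2 : Q.comp (Z.hom s s' z z') (((F i).app s z).1 p x)
        ≤ ((F i).app s' z').1 p x :=
      Quantaloid.le_lda.mpr
        (le_trans ((F i).mono s s' z z') (le_trans (iInf_le _ p) (iInf_le _ x)))
    exact le_trans h1 h2

/-!
With `λ = y ∘ s`, laws (a), (b), (c) and (e) hold even as equalities of `Q`-functors: they
follow from the naturality of `y` and of `s`, the unit laws `s ∘ y = 1 = s ∘ y_!` and the
associativity `s ∘ s_! = s ∘ s_P` of the presheaf monad, all checked pointwise through the
Yoneda lemma `PX(y x, σ) = σ x`. Only (d) is a genuine inequality, `y_! ≤ y_{PX}`, i.e.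
`σ x ∘ PX(τ, y x) ≤ PX(τ, σ)`, which is transitivity in `PX` read through the Yoneda lemma.
-/

theorem Quantaloid.le_iSup_comp_of_idm_le_right {a b : Q.Obj} {I : Q.Obj → Type u}
    (F : ∀ q, I q → Q.Hom q b) (G : ∀ q, I q → Q.Hom a q) (i : I a)
    (h : Q.idm a ≤ G a i) :
    F a i ≤ ⨆ q, ⨆ j : I q, Q.comp (F q j) (G q j) :=
  calc F a i = Q.comp (F a i) (Q.idm a) := (Q.comp_idm _).symm
    _ ≤ Q.comp (F a i) (G a i) := Quantaloid.comp_le_comp le_rfl h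
    _ ≤ _ := le_iSup₂_of_le a i le_rfl

theorem Quantaloid.le_iSup_comp_of_idm_le_left {a b : Q.Obj} {I : Q.Obj → Type u}
    (F : ∀ q, I q → Q.Hom q b) (G : ∀ q, I q → Q.Hom a q) (i : I b)
    (h : Q.idm b ≤ F b i) :
    G b i ≤ ⨆ q, ⨆ j : I q, Q.comp (F q j) (G q j) :=
  calc G b i = Q.comp (Q.idm b) (G b i) := (Q.idm_comp _).symm
    _ ≤ Q.comp (F b i) (G b i) := Quantaloid.comp_le_comp h le_rfl
    _ ≤ _ := le_iSup₂_of_le b i le_rfl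

theorem QFun.ext {X Y : QCat Q} {f g : QFun X Y} (h : ∀ p (x : X.el p), f.app p x = g.app p x) :
    f = g := by
  obtain ⟨f, _⟩ := f
  obtain ⟨g, _⟩ := g
  obtain rfl : f = g := funext₂ h
  rfl

theorem QFun.comp_app {X Y Z : QCat Q} (g : QFun Y Z) (f : QFun X Y) {p : Q.Obj} (x : X.el p) :
    (g.comp f).app p x = g.app p (f.app p x) := rfl

theorem QFun.le_of_val_le {Z X : QCat Q} {f g : QFun Z X.P}
    (h : ∀ s (z : Z.el s) p (x : X.el p), (f.app s z).1 p x ≤ (g.app s z).1 p x) : f ≤ g :=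
  fun s z => le_iInf fun p => le_iInf fun x =>
    Quantaloid.le_lda.mp (by rw [Q.idm_comp]; exact h s z p x)

theorem QCat.P_hom_comp_le (X : QCat Q) {s s' p : Q.Obj} (σ : X.P.el s) (σ' : X.P.el s')
    (x : X.el p) : Q.comp (X.P.hom s s' σ σ') (σ.1 p x) ≤ σ'.1 p x :=
  Quantaloid.le_lda.mpr (le_trans (iInf_le _ p) (iInf_le _ x))

theorem QCat.yoneda (X : QCat Q) {p s : Q.Obj} (x : X.el p) (σ : X.P.el s) :
    X.P.hom p s (X.y.app p x) σ = σ.1 p x := by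
  refine le_antisymm ?_ (le_iInf fun q => le_iInf fun x' => Quantaloid.le_lda.mp (σ.2 q p x' x))
  calc X.P.hom p s (X.y.app p x) σ
      = Q.comp (X.P.hom p s (X.y.app p x) σ) (Q.idm p) := (Q.comp_idm _).symm
    _ ≤ Q.comp (X.P.hom p s (X.y.app p x) σ) (X.hom p p x x) :=
        Quantaloid.comp_le_comp le_rfl (X.refl p x)
    _ ≤ σ.1 p x := X.P_hom_comp_le _ σ x

theorem pshf_app_val {X Y : QCat Q} (f : QFun X Y) {s p : Q.Obj} (σ : X.P.el s) (y : Y.el p) :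
    ((pshf f).app s σ).1 p y =
      ⨆ q, ⨆ x : X.el q, Q.comp (σ.1 q x) (Y.hom p q y (f.app q x)) :=
  rfl

theorem pshb_app_val {X Y : QCat Q} (f : QFun X Y) {s p : Q.Obj} (τ : Y.P.el s) (x : X.el p) :
    ((pshb f).app s τ).1 p x = τ.1 p (f.app p x) :=
  le_antisymm (iSup₂_le fun q y => τ.2 p q (f.app p x) y)
    (Quantaloid.le_iSup_comp_of_idm_le_right (fun q y => τ.1 q y)
      (fun q y => Y.hom p q (f.app p x) y) (f.app p x) (Y.refl p _))

theorem supP_app_val (X : QCat Q) {t p : Q.Obj} (S : X.P.P.el t) (x : X.el p) :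
    ((supP X).app t S).1 p x = S.1 p (X.y.app p x) :=
  pshb_app_val X.y S x

theorem pshf_comp_app {X Y Z : QCat Q} (g : QFun Y Z) (f : QFun X Y) {s : Q.Obj}
    (σ : X.P.el s) : (pshf (g.comp f)).app s σ = (pshf g).app s ((pshf f).app s σ) := by
  refine Subtype.ext (funext₂ fun p z => le_antisymm ?_ ?_)
  · refine iSup₂_le fun q x => le_iSup₂_of_le q (f.app q x) (Quantaloid.comp_le_comp ?_ le_rfl)
    exact Quantaloid.le_iSup_comp_of_idm_le_right _
      (fun q' x' => Y.hom q q' (f.app q x) (f.app q' x')) x (Y.refl _ _)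
  · refine iSup₂_le fun q' y => ?_
    simp only [pshf_app_val, Quantaloid.iSup_comp]
    refine iSup₂_le fun q x => le_iSup₂_of_le q x ?_
    rw [Q.comp_assoc]
    exact Quantaloid.comp_le_comp le_rfl
      (le_trans (Quantaloid.comp_le_comp (g.mono q' q y (f.app q x)) le_rfl) (Z.hom_comp_le _ _ _))

theorem pshf_app_y_app {X Y : QCat Q} (f : QFun X Y) {s : Q.Obj} (x : X.el s) :
    (pshf f).app s (X.y.app s x) = Y.y.app s (f.app s x) :=
  Subtype.ext <| funext₂ fun p y => le_antisymm
    (iSup₂_le fun q x' =>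
      le_trans (Quantaloid.comp_le_comp (f.mono q s x' x) le_rfl) (Y.hom_comp_le _ _ _))
    (Quantaloid.le_iSup_comp_of_idm_le_left (fun q x' => X.hom q s x' x)
      (fun q x' => Y.hom p q y (f.app q x')) x (X.refl s x))

theorem pshf_app_supP_app {X Y : QCat Q} (f : QFun X Y) {t : Q.Obj} (S : X.P.P.el t) :
    (pshf f).app t ((supP X).app t S) = (supP Y).app t ((pshf (pshf f)).app t S) := by
  refine Subtype.ext (funext₂ fun p y => ?_)
  rw [supP_app_val, pshf_app_val, pshf_app_val]
  refine le_antisymm (iSup₂_le fun q x => ?_) (iSup₂_le fun r σ => ?_)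
  · refine le_iSup₂_of_le q (X.y.app q x) (le_of_eq ?_)
    rw [supP_app_val, pshf_app_y_app, QCat.yoneda]
    rfl
  · simp only [QCat.yoneda, pshf_app_val, Quantaloid.comp_iSup]
    refine iSup₂_le fun q x => le_iSup₂_of_le q x ?_
    rw [← Q.comp_assoc, supP_app_val]
    refine Quantaloid.comp_le_comp ?_ le_rfl
    rw [← QCat.yoneda X x σ]
    exact S.2 q r (X.y.app q x) σ

theorem supP_app_pshf_y_app (X : QCat Q) {s : Q.Obj} (σ : X.P.el s) :
    (supP X).app s ((pshf X.y).app s σ) = σ := by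
  refine Subtype.ext (funext₂ fun p x => ?_)
  rw [supP_app_val, pshf_app_val]
  refine le_antisymm (iSup₂_le fun q x' => ?_) ?_
  · rw [QCat.yoneda]
    exact σ.2 p q x x'
  · exact Quantaloid.le_iSup_comp_of_idm_le_right _
      (fun q x' => X.P.hom p q (X.y.app p x) (X.y.app q x')) x (X.P.refl p _)

theorem supP_app_y_app (X : QCat Q) {s : Q.Obj} (σ : X.P.el s) :
    (supP X).app s ((QCat.y X.P).app s σ) = σ :=
  Subtype.ext (funext₂ fun _ x => (supP_app_val X _ x).trans (X.yoneda x σ))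

theorem supP_app_pshf_supP_app (X : QCat Q) {u : Q.Obj} (T : X.P.P.P.el u) :
    (supP X).app u ((pshf (supP X)).app u T) = (supP X).app u ((supP X.P).app u T) := by
  refine Subtype.ext (funext₂ fun p x => ?_)
  rw [supP_app_val, supP_app_val, supP_app_val, pshf_app_val]
  refine le_antisymm (iSup₂_le fun t S => ?_) ?_
  · rw [X.yoneda, supP_app_val, ← X.P.yoneda]
    exact T.2 p t _ S
  · refine Quantaloid.le_iSup_comp_of_idm_le_right _ _ ((QCat.y X.P).app p (X.y.app p x)) ?_
    rw [supP_app_y_app]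
    exact X.P.refl p _

theorem pshf_y_le_y (X : QCat Q) : pshf X.y ≤ QCat.y X.P := by
  refine QFun.le_of_val_le fun s σ r τ => iSup₂_le fun q x => ?_
  refine le_iInf fun p => le_iInf fun x' => Quantaloid.le_lda.mp ?_
  rw [Q.comp_assoc]
  calc Q.comp (σ.1 q x) (Q.comp (X.P.hom r q τ (X.y.app q x)) (τ.1 p x'))
      ≤ Q.comp (σ.1 q x) (X.hom p q x' x) :=
        Quantaloid.comp_le_comp le_rfl (X.P_hom_comp_le τ _ x')
    _ ≤ σ.1 p x' := σ.2 p q x' x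

/-- the presheaf 2-monad `𝔓 = (P, s, y)` distributes flatly over itself
by `λ_X = y_{PX} ∘ sup_{PX} : PPX → PPX` (here `T = P`, `Tf = f_!`, `e = y`, `m = s`):
`λ` satisfies (a), (b) strictly, (c), (d) and (e). -/
theorem statement6 (Q : Quantaloid.{u}) :
    -- (a) lax naturality: (Tf)_! ∘ λ_X ≤ λ_Y ∘ T(f_!)
    (∀ (X Y : QCat Q) (f : QFun X Y),
      (pshf (pshf f)).comp (lamP X) ≤ (lamP Y).comp (pshf (pshf f))) ∧
    -- (b) strict P-unit law: λ_X ∘ T y_X = y_{TX}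
    (∀ X : QCat Q, (lamP X).comp (pshf X.y) = QCat.y X.P) ∧
    -- (c) lax P-multiplication law: s_{TX} ∘ (λ_X)_! ∘ λ_{PX} ≤ λ_X ∘ T s_X
    (∀ X : QCat Q,
      (supP X.P).comp ((pshf (lamP X)).comp (lamP X.P)) ≤ (lamP X).comp (pshf (supP X))) ∧
    -- (d) lax T-unit law: (e_X)_! ≤ λ_X ∘ e_{PX}
    (∀ X : QCat Q, pshf X.y ≤ (lamP X).comp (QCat.y X.P)) ∧
    -- (e) lax T-multiplication law: (m_X)_! ∘ λ_{TX} ∘ T λ_X ≤ λ_X ∘ m_{PX}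
    (∀ X : QCat Q,
      (pshf (supP X)).comp ((lamP X.P).comp (pshf (lamP X))) ≤ (lamP X).comp (supP X.P)) := by
  refine ⟨fun X Y f => (QFun.ext fun t S => ?_).le, fun X => QFun.ext fun s σ => ?_,
    fun X => (QFun.ext fun u T => ?_).le, fun X => ?_, fun X => (QFun.ext fun u T => ?_).le⟩
  · simp only [lamP, QFun.comp_app, pshf_app_y_app, pshf_app_supP_app]
  · simp only [lamP, QFun.comp_app, supP_app_pshf_y_app]
  · simp only [lamP, QFun.comp_app, pshf_app_y_app, supP_app_y_app, supP_app_pshf_supP_app]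
  · have h : (lamP X).comp (QCat.y X.P) = QCat.y X.P :=
      QFun.ext fun s σ => by simp only [lamP, QFun.comp_app, supP_app_y_app]
    exact (pshf_y_le_y X).trans_eq h.symm
  · simp only [lamP, QFun.comp_app, pshf_comp_app, supP_app_pshf_y_app, pshf_app_y_app,
      supP_app_pshf_supP_app]

end QT
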